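/- If σ is a diagonal measure on X^d and the system (X^d, σ, T^{×d}) is conservative, then there are infinitely many integers n such that the transition from D_n(σ) to D_{n+1}(σ) corresponds to the central case, i.e. D_{n+1}(σ) = D_n(σ)(1,…,1). -/

import Mathlib

open MeasureTheory Set
open scoped ENNReal NNReal Classical

noncomputable section

/-- Heights of the towers of the infinite Chacon transformation
(tower `0` is `[0,1)` with a single level, so `chaconH 1 = 8`). -/
def chaconH : ℕ → ℕ
  | 0 => 1
  | n + 1 => 2 * (3 * chaconH n + 1)

/-- Left endpoint of level `k` of tower `n`.  At step `n+1`, tower `n` (which fills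
`[0, hₙ·3⁻ⁿ)`) is cut into three subcolumns of equal width; one spacer is added above the
middle subcolumn and `3hₙ+1` spacers above the third one, the spacers being taken
successively as the leftmost intervals of length `3⁻⁽ⁿ⁺¹⁾` in the unused part of `ℝ₊`;
then the three subcolumns are stacked left under right. -/
def chaconL : ℕ → ℕ → ℝ
  | 0, _ => 0
  | n + 1, k =>
      if k < chaconH n then chaconL n k
      else if k < 2 * chaconH n then chaconL n (k - chaconH n) + (3 : ℝ)⁻¹ ^ (n + 1)
      else if k = 2 * chaconH n then (chaconH n : ℝ) * (3 : ℝ)⁻¹ ^ n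
      else if k ≤ 3 * chaconH n then
        chaconL n (k - 2 * chaconH n - 1) + 2 * (3 : ℝ)⁻¹ ^ (n + 1)
      else (chaconH n : ℝ) * (3 : ℝ)⁻¹ ^ n
        + ((k : ℝ) - 3 * (chaconH n : ℝ)) * (3 : ℝ)⁻¹ ^ (n + 1)

/-- Level `k` of tower `n`: an interval of length `3⁻ⁿ`, closed to the left and open to
the right. -/
def chaconLevel (n k : ℕ) : Set ℝ := Ico (chaconL n k) (chaconL n k + (3 : ℝ)⁻¹ ^ n)

/-- The Chacon transformation on `ℝ`: each point of a non-top level of some tower is sent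
to the point directly above it (the value does not depend on the choice of the tower). -/
def chaconT0 (x : ℝ) : ℝ :=
  if h : ∃ p : ℕ × ℕ, p.2 + 1 < chaconH p.1 ∧ x ∈ chaconLevel p.1 p.2 then
    x - chaconL h.choose.1 h.choose.2 + chaconL h.choose.1 (h.choose.2 + 1)
  else x

/-- The inverse of the Chacon transformation on `ℝ`. -/
def chaconT0inv (x : ℝ) : ℝ :=
  if h : ∃ p : ℕ × ℕ, p.2 + 1 < chaconH p.1 ∧ x ∈ chaconLevel p.1 (p.2 + 1) then
    x - chaconL h.choose.1 (h.choose.2 + 1) + chaconL h.choose.1 h.choose.2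
  else x

/-- The space `X = ℝ₊`. -/
abbrev ChaconX : Type := ↥(Set.Ici (0 : ℝ))

/-- The infinite Chacon transformation `T` on `X = ℝ₊`. -/
def chaconT (x : ChaconX) : ChaconX :=
  ⟨max 0 (chaconT0 (x : ℝ)), Set.mem_Ici.mpr (le_max_left 0 _)⟩

/-- The inverse `T⁻¹` of the Chacon transformation on `X = ℝ₊`. -/
def chaconTinv (x : ChaconX) : ChaconX :=
  ⟨max 0 (chaconT0inv (x : ℝ)), Set.mem_Ici.mpr (le_max_left 0 _)⟩

/-- Integer powers `T^j` of the Chacon transformation. -/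
def chaconTZ (j : ℤ) : ChaconX → ChaconX :=
  if 0 ≤ j then chaconT^[j.toNat] else chaconTinv^[(-j).toNat]

/-- Lebesgue measure `μ` on `X = ℝ₊`. -/
def chaconMu : Measure ChaconX := volume.comap Subtype.val

/-- `C n`: the bottom half of tower `n` (its lowest `hₙ/2` levels), as a subset of `X`. -/
def chaconC (n : ℕ) : Set ChaconX :=
  {x | ∃ k, k < chaconH n / 2 ∧ (x : ℝ) ∈ chaconLevel n k}

/-- `tₙ x ∈ {1,2,3}`: the subcolumn of tower `n` containing `x`
(junk value `0` if `x` is not in tower `n`). -/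
def chaconTn (n : ℕ) (x : ChaconX) : ℕ :=
  if h : ∃ k, k < chaconH n ∧ (x : ℝ) ∈ chaconLevel n k then
    1 + (⌊((x : ℝ) - chaconL n h.choose) * (3 : ℝ) ^ (n + 1)⌋).toNat
  else 0

/-- The Cartesian power `T^{×ι}` of the Chacon transformation, acting coordinatewise. -/
def chaconTd (ι : Type) (x : ι → ChaconX) : ι → ChaconX := fun i => chaconT (x i)

/-- Integer powers `(T^{×ι})^j`, acting coordinatewise. -/
def chaconTdZ (ι : Type) (j : ℤ) (x : ι → ChaconX) : ι → ChaconX := fun i => chaconTZ j (x i)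

/-- `Cₙ^ι ⊆ X^ι`. -/
def chaconCd (ι : Type) (n : ℕ) : Set (ι → ChaconX) := {x | ∀ i, x i ∈ chaconC n}

/-- An `n`-box: a Cartesian product of levels of `C n`. -/
def IsNBox (ι : Type) (n : ℕ) (B : Set (ι → ChaconX)) : Prop :=
  ∃ k : ι → ℕ, (∀ i, k i < chaconH n / 2) ∧
    B = {x : ι → ChaconX | ∀ i, ((x i : ℝ)) ∈ chaconLevel n (k i)}

/-- An `n`-diagonal: a maximal finite family of `n`-boxes `B, T^{×d}B, …, (T^{×d})^ℓ B`,
regarded as the union of its boxes. -/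
def IsNDiagonal (ι : Type) (n : ℕ) (D : Set (ι → ChaconX)) : Prop :=
  ∃ (B : Set (ι → ChaconX)) (ℓ : ℕ),
    (∀ j : ℕ, j ≤ ℓ → IsNBox ι n (chaconTdZ ι (j : ℤ) '' B)) ∧
    ¬ chaconTdZ ι (-1) '' B ⊆ chaconCd ι n ∧
    ¬ chaconTdZ ι ((ℓ : ℤ) + 1) '' B ⊆ chaconCd ι n ∧
    D = ⋃ j ∈ Finset.range (ℓ + 1), chaconTdZ ι (j : ℤ) '' B

/-- A measure is boundedly finite if bounded (measurable) sets have finite measure. -/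
def BoundedlyFinite {α : Type*} [MeasurableSpace α] [PseudoMetricSpace α]
    (σ : Measure α) : Prop :=
  ∀ A : Set α, MeasurableSet A → Bornology.IsBounded A → σ A < ⊤

/-- Diagonal measures on `X^ι`: boundedly finite, `T^{×ι}`-invariant measures which are,
for every large enough `n`, concentrated on a single `n`-diagonal inside `Cₙ^ι`. -/
def IsDiagonalMeasure (ι : Type) [Fintype ι] (σ : Measure (ι → ChaconX)) : Prop :=
  BoundedlyFinite σ ∧ σ.map (chaconTd ι) = σ ∧
    ∃ n₀ : ℕ, 1 ≤ n₀ ∧ ∀ n, n₀ ≤ n →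
      ∃ D : Set (ι → ChaconX), IsNDiagonal ι n D ∧ σ (chaconCd ι n \ D) = 0

/-- A wandering set for the `ℤ`-action `Uz`. -/
def ZWandering {α : Type*} (Uz : ℤ → α → α) (W : Set α) : Prop :=
  ∀ j k : ℤ, j ≠ k → Disjoint (Uz j '' W) (Uz k '' W)

/-- Conservativity: every measurable wandering set is null. -/
def ZConservative {α : Type*} [MeasurableSpace α] (σ : Measure α) (Uz : ℤ → α → α) : Prop :=
  ∀ W : Set α, MeasurableSet W → ZWandering Uz W → σ W = 0

/-- Total dissipativity: mod `σ`, the space is the disjoint union of the iterates of a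
wandering set. -/
def ZTotallyDissipative {α : Type*} [MeasurableSpace α] (σ : Measure α)
    (Uz : ℤ → α → α) : Prop :=
  ∃ W : Set α, MeasurableSet W ∧ ZWandering Uz W ∧ σ ((⋃ j : ℤ, Uz j '' W)ᶜ) = 0

/-- Ergodicity of a (not necessarily finite) invariant measure: every invariant
measurable set is null or conull. -/
def MeasErgodic {α : Type*} [MeasurableSpace α] (σ : Measure α) (U : α → α) : Prop :=
  ∀ A : Set α, MeasurableSet A → U ⁻¹' A = A → σ A = 0 ∨ σ Aᶜ = 0

/-- `Icc a b` is an `n`-crossing for `x`: a maximal finite set of consecutive integers `j`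
with `(T^{×ι})^j x ∈ Cₙ^ι`. -/
def IsCrossing (ι : Type) (n : ℕ) (x : ι → ChaconX) (a b : ℤ) : Prop :=
  a ≤ b ∧ (∀ j : ℤ, a ≤ j → j ≤ b → chaconTdZ ι j x ∈ chaconCd ι n) ∧
    chaconTdZ ι (a - 1) x ∉ chaconCd ι n ∧ chaconTdZ ι (b + 1) x ∉ chaconCd ι n

/-- `n(x)`: the smallest `n ≥ 1` with `x ∈ Cₙ^ι`. -/
def chaconNOf (ι : Type) (x : ι → ChaconX) : ℕ :=
  if h : ∃ n : ℕ, 1 ≤ n ∧ x ∈ chaconCd ι n then Nat.find h else 0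

/-- `B(τ)`: the points of `B` whose coordinate `i` lies in subcolumn `τ i` of tower `n`. -/
def chaconBoxTau (ι : Type) (n : ℕ) (B : Set (ι → ChaconX)) (τ : ι → ℕ) :
    Set (ι → ChaconX) :=
  {x ∈ B | ∀ i, chaconTn n (x i) = τ i}

/-- The transition from the `n`-diagonal `D` to the `(n+1)`-diagonal `D'` is the central
one, i.e. `D' = D(1,…,1)`. -/
def CentralTransition (ι : Type) (n : ℕ) (D D' : Set (ι → ChaconX)) : Prop :=
  ∀ B : Set (ι → ChaconX), IsNBox ι n B → B ⊆ D →
    chaconBoxTau ι n B (fun _ => 1) ⊆ D'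

/-- The `n`-diagonal containing a given set (junk value `∅` if there is none). -/
def diagOfBox (ι : Type) (n : ℕ) (B : Set (ι → ChaconX)) : Set (ι → ChaconX) :=
  if h : ∃ D, IsNDiagonal ι n D ∧ B ⊆ D then h.choose else ∅

/-- `D(τ)`: the `(n+1)`-diagonal containing `B(τ)` for an `n`-box `B ⊆ D`. -/
def diagTau (ι : Type) (n : ℕ) (D : Set (ι → ChaconX)) (τ : ι → ℕ) : Set (ι → ChaconX) :=
  if h : ∃ B, IsNBox ι n B ∧ B ⊆ D then diagOfBox ι (n + 1) (chaconBoxTau ι n h.choose τ)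
  else ∅

/-- A consistent family of diagonals `(Dₙ)_{n ≥ n₀}`. -/
def IsConsistentFamily (ι : Type) (n₀ : ℕ) (D : ℕ → Set (ι → ChaconX)) : Prop :=
  (∀ n, n₀ ≤ n → IsNDiagonal ι n (D n)) ∧
    (chaconCd ι (n₀ - 1) ∩ ⋂ n, ⋂ (_ : n₀ ≤ n), D n).Nonempty ∧
    ∀ n, n₀ ≤ n → D (n + 1) ∩ chaconCd ι n ⊆ D n

/-- `x` is seen by the family of diagonals `(Dₙ)_{n ≥ n₀}`. -/
def SeenByFam (ι : Type) (n₀ : ℕ) (D : ℕ → Set (ι → ChaconX)) (x : ι → ChaconX) : Prop :=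
  ∀ n, n₀ ≤ n → x ∉ chaconCd ι n ∨ x ∈ D n

/-- Graph joinings arising from powers of `T`:
`σ(A₁ × ⋯ × A_d) = α μ(T^{-k₁}A₁ ∩ ⋯ ∩ T^{-k_d}A_d)` for some `0 < α < ∞`. -/
def IsGraphJoining (ι : Type) [Fintype ι] (σ : Measure (ι → ChaconX)) : Prop :=
  ∃ (α : ℝ≥0∞) (k : ι → ℤ), 0 < α ∧ α ≠ ⊤ ∧
    ∀ A : ι → Set ChaconX, (∀ i, MeasurableSet (A i)) →
      σ (Set.univ.pi A) = α * chaconMu (⋂ i, chaconTZ (k i) ⁻¹' A i)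

/-- Ergodic components of `σ`: the nonzero boundedly finite `T^{×ι}`-invariant ergodic
measures, absolutely continuous with respect to `σ`, which appear in its ergodic
decomposition. -/
def IsErgodicComponent (ι : Type) [Fintype ι] (σ ρ : Measure (ι → ChaconX)) : Prop :=
  ρ ≠ 0 ∧ BoundedlyFinite ρ ∧ ρ.map (chaconTd ι) = ρ ∧ MeasErgodic ρ (chaconTd ι) ∧ ρ ≪ σ

end

/-!
Suppose the transition `Dₙ → Dₙ₊₁` is not central for any `n ≥ m`. Remove from an `m`-box of
positive measure the null set of points that are not seen by the diagonals `Dₙ` and of points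
with a coordinate in the forward orbit of `0` (off which `T` is invertible); the rest `W` is
wandering, which contradicts conservativity. Indeed, if `y` and `(T^{×d})^δ y` both lie in `W`,
the orbit segment between them lies in `Cₙ^d` for `n` large. Going down from `n + 1` to `n`,
a non-central transition forbids the two ends of the segment from sitting in different
subcolumns of tower `n`, so the segment stays in `Cₙ^d`. Down at level `m`, the segment climbs
tower `m` one level per step, so it cannot come back to the box it started from.
-/

open Function

section Levels

lemma chaconH_succ (n : ℕ) : chaconH (n + 1) = 6 * chaconH n + 2 := by
  simp only [chaconH]; ring

lemma chaconH_pos (n : ℕ) : 0 < chaconH n := by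
  cases n <;> simp [chaconH]

lemma chaconH_succ_div_two (n : ℕ) : chaconH (n + 1) / 2 = 3 * chaconH n + 1 := by
  rw [chaconH_succ]; omega

lemma chaconH_div_two_lt (n : ℕ) : chaconH n / 2 < chaconH n := by
  have := chaconH_pos n; omega

lemma four_pow_le_chaconH (n : ℕ) : 4 ^ n ≤ chaconH n := by
  induction n with
  | zero => simp [chaconH]
  | succ n ih => rw [chaconH_succ, pow_succ]; omega

/-- Level `k` of tower `n` is `[i, i + 1) · 3⁻ⁿ` with `i = chaconIdx n k`. -/
def chaconIdx : ℕ → ℕ → ℕ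
  | 0, _ => 0
  | n + 1, k =>
      if k < chaconH n then 3 * chaconIdx n k
      else if k < 2 * chaconH n then 3 * chaconIdx n (k - chaconH n) + 1
      else if k = 2 * chaconH n then 3 * chaconH n
      else if k ≤ 3 * chaconH n then 3 * chaconIdx n (k - 2 * chaconH n - 1) + 2
      else 3 * chaconH n + (k - 3 * chaconH n)

lemma chaconL_eq : ∀ n k, chaconL n k = chaconIdx n k * (3 : ℝ)⁻¹ ^ n
  | 0, k => by simp [chaconL, chaconIdx]
  | n + 1, k => by
    have e : (3 : ℝ)⁻¹ ^ n = 3 * (3 : ℝ)⁻¹ ^ (n + 1) := by ring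
    simp only [chaconL, chaconIdx]
    split_ifs with h₁ h₂ h₃ h₄
    · rw [chaconL_eq, e]; push_cast; ring
    · rw [chaconL_eq, e]; push_cast; ring
    · rw [e]; push_cast; ring
    · rw [chaconL_eq, e]; push_cast; ring
    · rw [e, Nat.cast_add, Nat.cast_sub (by omega)]; push_cast; ring

lemma chaconIdx_lt : ∀ {n k}, k < chaconH n → chaconIdx n k < chaconH n
  | 0, _, _ => by simp [chaconIdx, chaconH]
  | n + 1, k, hk => by
    have := chaconH_pos n
    rw [chaconH_succ] at hk ⊢
    simp only [chaconIdx]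
    split_ifs with h₁ h₂ h₃ h₄
    · have := chaconIdx_lt h₁; omega
    · have := chaconIdx_lt (show k - chaconH n < chaconH n by omega); omega
    · omega
    · have := chaconIdx_lt (show k - 2 * chaconH n - 1 < chaconH n by omega); omega
    · omega

lemma chaconIdx_surj : ∀ {n u}, u < chaconH n → ∃ k < chaconH n, chaconIdx n k = u
  | 0, u, hu => ⟨0, by simp [chaconH], by simp [chaconIdx, chaconH] at hu ⊢; omega⟩
  | n + 1, u, hu => by
    have := chaconH_pos n
    rw [chaconH_succ] at hu
    simp only [chaconH_succ, chaconIdx]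
    by_cases hu₃ : u < 3 * chaconH n
    · obtain ⟨k, hk, hku⟩ := chaconIdx_surj (show u / 3 < chaconH n by omega)
      have : u % 3 = 0 ∨ u % 3 = 1 ∨ u % 3 = 2 := by omega
      rcases this with h | h | h
      · exact ⟨k, by omega, by rw [if_pos hk]; omega⟩
      · refine ⟨k + chaconH n, by omega, ?_⟩
        rw [if_neg (by omega), if_pos (by omega), Nat.add_sub_cancel]; omega
      · refine ⟨k + 2 * chaconH n + 1, by omega, ?_⟩
        rw [if_neg (by omega), if_neg (by omega), if_neg (by omega), if_pos (by omega)]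
        rw [show k + 2 * chaconH n + 1 - 2 * chaconH n - 1 = k by omega]; omega
    · by_cases hu₃' : u = 3 * chaconH n
      · refine ⟨2 * chaconH n, by omega, ?_⟩
        rw [if_neg (by omega), if_neg (by omega), if_pos rfl]; omega
      · refine ⟨u, by omega, ?_⟩
        rw [if_neg (by omega), if_neg (by omega), if_neg (by omega), if_neg (by omega)]; omega

/-- A surjection of `[0, hₙ)` onto itself is injective. -/
lemma chaconIdx_injOn (n : ℕ) : Set.InjOn (chaconIdx n) (Iio (chaconH n)) := by
  intro k hk k' hk' h
  exact Finset.inj_on_of_surj_on_of_card_le (s := Finset.range (chaconH n))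
    (t := Finset.range (chaconH n)) (fun k _ => chaconIdx n k)
    (fun k hk => Finset.mem_range.2 (chaconIdx_lt (Finset.mem_range.1 hk)))
    (fun u hu => by
      obtain ⟨k, hk, rfl⟩ := chaconIdx_surj (Finset.mem_range.1 hu)
      exact ⟨k, Finset.mem_range.2 hk, rfl⟩)
    le_rfl (Finset.mem_range.2 hk) (Finset.mem_range.2 hk') h

lemma chaconL_zero : ∀ n, chaconL n 0 = 0
  | 0 => rfl
  | n + 1 => by simp [chaconL, chaconH_pos, chaconL_zero n]

lemma eq_of_mem_chaconLevel {n k k' : ℕ} {x : ℝ} (hk : k < chaconH n) (hk' : k' < chaconH n)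
    (hx : x ∈ chaconLevel n k) (hx' : x ∈ chaconLevel n k') : k = k' := by
  apply chaconIdx_injOn n hk hk'
  simp only [chaconLevel, chaconL_eq, mem_Ico] at hx hx'
  have hε : (0 : ℝ) < (3 : ℝ)⁻¹ ^ n := by positivity
  have h₁ : (chaconIdx n k : ℝ) < chaconIdx n k' + 1 :=
    lt_of_mul_lt_mul_right (by rw [add_mul, one_mul]; linarith) hε.le
  have h₂ : (chaconIdx n k' : ℝ) < chaconIdx n k + 1 :=
    lt_of_mul_lt_mul_right (by rw [add_mul, one_mul]; linarith) hε.le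
  norm_cast at h₁ h₂
  omega

lemma zero_mem_chaconLevel_zero (n : ℕ) : (0 : ℝ) ∈ chaconLevel n 0 := by
  simp [chaconLevel, chaconL_zero]

/-- Subcolumn `τ ∈ {1, 2, 3}` of tower `n` starts at level `chaconOff n τ` of tower `n + 1`. -/
def chaconOff (n τ : ℕ) : ℕ :=
  if τ ≤ 1 then 0 else if τ = 2 then chaconH n else 2 * chaconH n + 1

lemma chaconOff_le (n τ : ℕ) : chaconOff n τ ≤ 2 * chaconH n + 1 := by
  unfold chaconOff; split_ifs <;> omega

lemma chaconL_succ_add_chaconOff {n k τ : ℕ} (hk : k < chaconH n) (hτ : 1 ≤ τ) (hτ' : τ ≤ 3) :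
    chaconL (n + 1) (k + chaconOff n τ) = chaconL n k + (τ - 1) * (3 : ℝ)⁻¹ ^ (n + 1) := by
  interval_cases τ
  · rw [show chaconOff n 1 = 0 by simp [chaconOff], add_zero, chaconL, if_pos hk]; norm_num
  · rw [show chaconOff n 2 = chaconH n by simp [chaconOff], chaconL, if_neg (by omega),
      if_pos (by omega), Nat.add_sub_cancel]
    norm_num
  · rw [show chaconOff n 3 = 2 * chaconH n + 1 by simp [chaconOff], chaconL, if_neg (by omega),
      if_neg (by omega), if_neg (by omega), if_pos (by omega),
      show k + (2 * chaconH n + 1) - 2 * chaconH n - 1 = k by omega]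
    norm_num

lemma chaconLevel_succ_add_chaconOff {n k τ : ℕ} (hk : k < chaconH n) (hτ : 1 ≤ τ)
    (hτ' : τ ≤ 3) : chaconLevel (n + 1) (k + chaconOff n τ) =
      Ico (chaconL n k + (τ - 1) * (3 : ℝ)⁻¹ ^ (n + 1))
        (chaconL n k + τ * (3 : ℝ)⁻¹ ^ (n + 1)) := by
  rw [chaconLevel, chaconL_succ_add_chaconOff hk hτ hτ']; ring_nf

lemma chaconLevel_succ_add_chaconOff_subset {n k τ : ℕ} (hk : k < chaconH n) (hτ : 1 ≤ τ)
    (hτ' : τ ≤ 3) : chaconLevel (n + 1) (k + chaconOff n τ) ⊆ chaconLevel n k := by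
  rw [chaconLevel_succ_add_chaconOff hk hτ hτ', chaconLevel]
  have hε : (0 : ℝ) < (3 : ℝ)⁻¹ ^ (n + 1) := by positivity
  have e : (3 : ℝ)⁻¹ ^ n = 3 * (3 : ℝ)⁻¹ ^ (n + 1) := by ring
  have : (1 : ℝ) ≤ τ ∧ (τ : ℝ) ≤ 3 := ⟨by exact_mod_cast hτ, by exact_mod_cast hτ'⟩
  apply Ico_subset_Ico <;> nlinarith

lemma exists_mem_chaconLevel_succ {n k : ℕ} {x : ℝ} (hk : k < chaconH n)
    (hx : x ∈ chaconLevel n k) :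
    ∃ τ, 1 ≤ τ ∧ τ ≤ 3 ∧ x ∈ chaconLevel (n + 1) (k + chaconOff n τ) := by
  have e : (3 : ℝ)⁻¹ ^ n = 3 * (3 : ℝ)⁻¹ ^ (n + 1) := by ring
  obtain ⟨h₁, h₂⟩ := hx
  by_cases c₁ : x < chaconL n k + (3 : ℝ)⁻¹ ^ (n + 1)
  · refine ⟨1, le_rfl, by norm_num, ?_⟩
    rw [chaconLevel_succ_add_chaconOff hk le_rfl (by norm_num)]
    constructor <;> norm_num <;> linarith
  by_cases c₂ : x < chaconL n k + 2 * (3 : ℝ)⁻¹ ^ (n + 1)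
  · refine ⟨2, by norm_num, by norm_num, ?_⟩
    rw [chaconLevel_succ_add_chaconOff hk (by norm_num) (by norm_num)]
    constructor <;> norm_num <;> linarith
  · refine ⟨3, by norm_num, le_rfl, ?_⟩
    rw [chaconLevel_succ_add_chaconOff hk (by norm_num) le_rfl]
    constructor <;> norm_num <;> linarith

lemma add_chaconOff_lt {n k τ : ℕ} (hk : k < chaconH n) : k + chaconOff n τ < chaconH (n + 1) := by
  have := chaconOff_le n τ; rw [chaconH_succ]; omega

lemma add_chaconOff_lt_div_two {n k τ : ℕ} (hk : k < chaconH n) :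
    k + chaconOff n τ < chaconH (n + 1) / 2 := by
  have := chaconOff_le n τ; rw [chaconH_succ_div_two]; omega

lemma exists_eq_add_chaconOff {n k k' : ℕ} {x : ℝ} (hk : k < chaconH n)
    (hk' : k' < chaconH (n + 1)) (hx : x ∈ chaconLevel n k) (hx' : x ∈ chaconLevel (n + 1) k') :
    ∃ τ, 1 ≤ τ ∧ τ ≤ 3 ∧ k' = k + chaconOff n τ := by
  obtain ⟨τ, hτ, hτ', hxτ⟩ := exists_mem_chaconLevel_succ hk hx
  exact ⟨τ, hτ, hτ', eq_of_mem_chaconLevel hk' (add_chaconOff_lt hk) hx' hxτ⟩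

/-- The levels of tower `p` reappear, translated by a common amount, as a run of consecutive
levels of any later tower `P`. -/
lemma exists_chaconL_shift {p k : ℕ} {x : ℝ} (hk : k < chaconH p) (hx : x ∈ chaconLevel p k)
    {P : ℕ} (hP : p ≤ P) : ∃ (o : ℕ) (c : ℝ), x ∈ chaconLevel P (k + o) ∧
      ∀ k' < chaconH p, k' + o < chaconH P ∧ chaconL P (k' + o) = chaconL p k' + c := by
  induction P, hP using Nat.le_induction with
  | base => exact ⟨0, 0, hx, fun k' hk' => ⟨hk', by simp⟩⟩
  | succ P _ ih =>
    obtain ⟨o, c, hxo, hshift⟩ := ih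
    obtain ⟨τ, hτ, hτ', hxτ⟩ := exists_mem_chaconLevel_succ (hshift k hk).1 hxo
    refine ⟨o + chaconOff P τ, c + (τ - 1) * (3 : ℝ)⁻¹ ^ (P + 1), by rwa [← add_assoc],
      fun k' hk' => ⟨?_, ?_⟩⟩
    · rw [← add_assoc]; exact add_chaconOff_lt (hshift k' hk').1
    · rw [← add_assoc, chaconL_succ_add_chaconOff (hshift k' hk').1 hτ hτ', (hshift k' hk').2]
      ring

/-- The jump from level `j` to level `j + 1` does not depend on the tower it is read in; with
`e = 0` and `e = 1` this makes `chaconT0` and `chaconT0inv` independent of the chosen witness. -/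
lemma chaconL_succ_sub_eq {p q j r e : ℕ} {x : ℝ} (hj : j + 1 < chaconH p)
    (hr : r + 1 < chaconH q) (he : e ≤ 1) (hxp : x ∈ chaconLevel p (j + e))
    (hxq : x ∈ chaconLevel q (r + e)) :
    chaconL p (j + 1) - chaconL p j = chaconL q (r + 1) - chaconL q r := by
  obtain ⟨o, c, hxo, hp⟩ := exists_chaconL_shift (by omega) hxp (le_max_left p q)
  obtain ⟨o', c', hxo', hq⟩ := exists_chaconL_shift (by omega) hxq (le_max_right p q)
  have hjr : j + o = r + o' := by
    have := eq_of_mem_chaconLevel (hp _ (by omega)).1 (hq _ (by omega)).1 hxo hxo'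
    omega
  have h₁ := (hp (j + 1) hj).2
  have h₂ := (hp j (by omega)).2
  have h₃ := (hq (r + 1) hr).2
  have h₄ := (hq r (by omega)).2
  rw [show j + 1 + o = r + o' + 1 by omega] at h₁
  rw [show r + 1 + o' = r + o' + 1 by omega] at h₃
  rw [hjr] at h₂
  linarith

lemma chaconL_nonneg (n k : ℕ) : 0 ≤ chaconL n k := by
  rw [chaconL_eq]; positivity

lemma exists_mem_chaconLevel {x : ℝ} (hx : 0 ≤ x) : ∃ n k, k < chaconH n ∧ x ∈ chaconLevel n k := by
  obtain ⟨n, hn⟩ := pow_unbounded_of_one_lt x (by norm_num : (1 : ℝ) < 4 / 3)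
  have hε : (3 : ℝ) ^ n * (3 : ℝ)⁻¹ ^ n = 1 := by rw [← mul_pow]; norm_num
  have hy : 0 ≤ x * 3 ^ n := by positivity
  have hyh : x * 3 ^ n < chaconH n := by
    calc x * 3 ^ n < (4 / 3) ^ n * 3 ^ n := by gcongr
      _ = 4 ^ n := by rw [← mul_pow]; norm_num
      _ ≤ chaconH n := by exact_mod_cast four_pow_le_chaconH n
  obtain ⟨k, hk, hku⟩ := chaconIdx_surj ((Nat.floor_lt hy).2 hyh)
  refine ⟨n, k, hk, ?_⟩
  have hx' : x = x * 3 ^ n * (3 : ℝ)⁻¹ ^ n := by rw [mul_assoc, hε, mul_one]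
  rw [chaconLevel, chaconL_eq, hku, mem_Ico, ← add_one_mul]
  nth_rewrite 2 [hx']; nth_rewrite 3 [hx']
  exact ⟨by gcongr; exact Nat.floor_le hy, by gcongr; exact Nat.lt_floor_add_one _⟩

lemma exists_mem_chaconLevel_interior {x : ℝ} (hx : 0 ≤ x) :
    ∃ n k, k + 1 < chaconH n ∧ (0 < x → 0 < k) ∧ x ∈ chaconLevel n k := by
  obtain ⟨n₀, k₀, hk₀, hx₀⟩ := exists_mem_chaconLevel hx
  obtain ⟨e, he⟩ : ∃ e : ℕ, 0 < x → (3 : ℝ)⁻¹ ^ e < x := by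
    rcases hx.lt_or_eq with h | h
    · obtain ⟨e, he⟩ := exists_pow_lt_of_lt_one h (by norm_num : (3 : ℝ)⁻¹ < 1)
      exact ⟨e, fun _ => he⟩
    · exact ⟨0, fun h' => absurd h h'.ne⟩
  obtain ⟨o, _c, hxo, hshift⟩ := exists_chaconL_shift hk₀ hx₀ (le_max_left n₀ e)
  obtain ⟨τ, -, -, hxτ⟩ := exists_mem_chaconLevel_succ (hshift k₀ hk₀).1 hxo
  refine ⟨_, _, ?_, fun hpos => ?_, hxτ⟩
  · have := chaconOff_le (max n₀ e) τ; have := (hshift k₀ hk₀).1; rw [chaconH_succ]; omega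
  · suffices 0 < k₀ + o by omega
    refine Nat.pos_of_ne_zero fun h0 => ?_
    rw [h0, chaconLevel, chaconL_zero, zero_add] at hxo
    have : (3 : ℝ)⁻¹ ^ max n₀ e ≤ (3 : ℝ)⁻¹ ^ e :=
      pow_le_pow_of_le_one (by norm_num) (by norm_num) (le_max_right _ _)
    linarith [hxo.2, he hpos]

lemma chaconT0_eq {n k : ℕ} {x : ℝ} (hk : k + 1 < chaconH n) (hx : x ∈ chaconLevel n k) :
    chaconT0 x = x - chaconL n k + chaconL n (k + 1) := by
  have hE : ∃ p : ℕ × ℕ, p.2 + 1 < chaconH p.1 ∧ x ∈ chaconLevel p.1 p.2 := ⟨(n, k), hk, hx⟩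
  obtain ⟨h₁, h₂⟩ := hE.choose_spec
  rw [chaconT0, dif_pos hE]
  linarith [chaconL_succ_sub_eq (e := 0) h₁ hk zero_le_one h₂ hx]

lemma chaconT0inv_eq {n k : ℕ} {x : ℝ} (hk : k + 1 < chaconH n)
    (hx : x ∈ chaconLevel n (k + 1)) : chaconT0inv x = x - chaconL n (k + 1) + chaconL n k := by
  have hE : ∃ p : ℕ × ℕ, p.2 + 1 < chaconH p.1 ∧ x ∈ chaconLevel p.1 (p.2 + 1) :=
    ⟨(n, k), hk, hx⟩
  obtain ⟨h₁, h₂⟩ := hE.choose_spec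
  rw [chaconT0inv, dif_pos hE]
  linarith [chaconL_succ_sub_eq (e := 1) h₁ hk le_rfl h₂ hx]

lemma coe_chaconT {x : ChaconX} {n k : ℕ} (hk : k + 1 < chaconH n)
    (hx : (x : ℝ) ∈ chaconLevel n k) : (chaconT x : ℝ) = x - chaconL n k + chaconL n (k + 1) := by
  change max 0 (chaconT0 x) = _
  rw [chaconT0_eq hk hx, max_eq_right]
  linarith [hx.1, chaconL_nonneg n (k + 1)]

lemma chaconT_mem_chaconLevel {x : ChaconX} {n k : ℕ} (hk : k + 1 < chaconH n)
    (hx : (x : ℝ) ∈ chaconLevel n k) : (chaconT x : ℝ) ∈ chaconLevel n (k + 1) := by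
  rw [coe_chaconT hk hx]
  exact ⟨by linarith [hx.1], by linarith [hx.2]⟩

lemma coe_chaconTinv {x : ChaconX} {n k : ℕ} (hk : k + 1 < chaconH n)
    (hx : (x : ℝ) ∈ chaconLevel n (k + 1)) :
    (chaconTinv x : ℝ) = x - chaconL n (k + 1) + chaconL n k := by
  change max 0 (chaconT0inv x) = _
  rw [chaconT0inv_eq hk hx, max_eq_right]
  linarith [hx.1, chaconL_nonneg n k]

lemma chaconTinv_mem_chaconLevel {x : ChaconX} {n k : ℕ} (hk : k + 1 < chaconH n)
    (hx : (x : ℝ) ∈ chaconLevel n (k + 1)) : (chaconTinv x : ℝ) ∈ chaconLevel n k := by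
  rw [coe_chaconTinv hk hx]
  exact ⟨by linarith [hx.1], by linarith [hx.2]⟩

end Levels

section OrbitOfZero

def chaconZero : ChaconX := ⟨0, self_mem_Ici⟩

lemma chaconTinv_chaconT (x : ChaconX) : chaconTinv (chaconT x) = x := by
  obtain ⟨n, k, hk, -, hx⟩ := exists_mem_chaconLevel_interior x.2
  ext
  rw [coe_chaconTinv hk (chaconT_mem_chaconLevel hk hx), coe_chaconT hk hx]
  ring

lemma chaconT_chaconTinv {x : ChaconX} (hx : x ≠ chaconZero) : chaconT (chaconTinv x) = x := by
  have hpos : 0 < (x : ℝ) := lt_of_le_of_ne x.2 fun h => hx (Subtype.ext h.symm)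
  obtain ⟨n, k, hk, hk₀, hxk⟩ := exists_mem_chaconLevel_interior x.2
  obtain ⟨j, rfl⟩ := Nat.exists_eq_add_of_lt (hk₀ hpos)
  rw [zero_add] at hk hxk
  ext
  rw [coe_chaconT (by omega) (chaconTinv_mem_chaconLevel (by omega) hxk),
    coe_chaconTinv (by omega) hxk]
  ring

lemma chaconT_injective : Injective chaconT :=
  LeftInverse.injective chaconTinv_chaconT

lemma chaconT_ne_zero (x : ChaconX) : chaconT x ≠ chaconZero := by
  obtain ⟨n, k, hk, -, hx⟩ := exists_mem_chaconLevel_interior x.2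
  intro h
  have := chaconT_mem_chaconLevel hk hx
  rw [h] at this
  have := eq_of_mem_chaconLevel hk (chaconH_pos n) this (zero_mem_chaconLevel_zero n)
  omega

/-- The forward orbit of `0`, off which `T` is invertible. -/
def chaconOrbitZero : Set ChaconX := range fun s : ℕ => chaconT^[s] chaconZero

lemma chaconOrbitZero_countable : chaconOrbitZero.Countable := countable_range _

lemma ne_zero_of_not_mem_chaconOrbitZero {x : ChaconX} (hx : x ∉ chaconOrbitZero) :
    x ≠ chaconZero :=
  fun h => hx ⟨0, h.symm⟩

lemma chaconT_not_mem_chaconOrbitZero {x : ChaconX} (hx : x ∉ chaconOrbitZero) :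
    chaconT x ∉ chaconOrbitZero := by
  rintro ⟨_ | s, hs⟩ <;> dsimp only at hs
  · exact chaconT_ne_zero x hs.symm
  · exact hx ⟨s, chaconT_injective (by rwa [iterate_succ_apply'] at hs)⟩

lemma chaconTinv_not_mem_chaconOrbitZero {x : ChaconX} (hx : x ∉ chaconOrbitZero) :
    chaconTinv x ∉ chaconOrbitZero := by
  rintro ⟨s, hs⟩
  refine hx ⟨s + 1, ?_⟩
  dsimp only at hs ⊢
  rw [iterate_succ_apply', hs, chaconT_chaconTinv (ne_zero_of_not_mem_chaconOrbitZero hx)]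

noncomputable def chaconPerm : Equiv.Perm (chaconOrbitZeroᶜ : Set ChaconX) where
  toFun x := ⟨chaconT x, chaconT_not_mem_chaconOrbitZero x.2⟩
  invFun x := ⟨chaconTinv x, chaconTinv_not_mem_chaconOrbitZero x.2⟩
  left_inv x := Subtype.ext (chaconTinv_chaconT x)
  right_inv x := Subtype.ext (chaconT_chaconTinv (ne_zero_of_not_mem_chaconOrbitZero x.2))

lemma coe_chaconPerm_zpow (j : ℤ) (x : (chaconOrbitZeroᶜ : Set ChaconX)) :
    ((chaconPerm ^ j) x : ChaconX) = chaconTZ j x := by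
  rcases j with n | n
  · have h : Semiconj Subtype.val chaconPerm chaconT := fun _ => rfl
    simp [chaconTZ, Equiv.Perm.coe_pow, (h.iterate_right n) x]
  · have h : Semiconj Subtype.val ⇑(chaconPerm⁻¹) chaconTinv := fun _ => rfl
    rw [zpow_negSucc, ← inv_pow, Equiv.Perm.coe_pow, (h.iterate_right (n + 1)) x, chaconTZ,
      if_neg (Int.negSucc_lt_zero n).not_ge]
    rfl

lemma chaconTZ_eq_iterate_of_eq {j k : ℤ} (hkj : k < j) {x y : ChaconX}
    (hx : x ∉ chaconOrbitZero) (hy : y ∉ chaconOrbitZero) (h : chaconTZ j x = chaconTZ k y) :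
    y = chaconT^[(j - k).toNat] x := by
  rw [← coe_chaconPerm_zpow j ⟨x, hx⟩, ← coe_chaconPerm_zpow k ⟨y, hy⟩] at h
  have h' : (⟨y, hy⟩ : (chaconOrbitZeroᶜ : Set ChaconX)) = (chaconPerm ^ (j - k)) ⟨x, hx⟩ := by
    rw [sub_eq_neg_add, zpow_add, Equiv.Perm.mul_apply, Subtype.ext h, ← Equiv.Perm.mul_apply,
      zpow_neg, inv_mul_cancel, Equiv.Perm.one_apply]
  change ((⟨y, hy⟩ : (chaconOrbitZeroᶜ : Set ChaconX)) : ChaconX) = _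
  rw [h', coe_chaconPerm_zpow, chaconTZ, if_pos (by omega)]

end OrbitOfZero

section Boxes

variable {ι : Type}

lemma chaconC_mono {n n' : ℕ} (h : n ≤ n') : chaconC n ⊆ chaconC n' := by
  induction n', h using Nat.le_induction with
  | base => rfl
  | succ n' _ ih =>
    refine ih.trans fun x ⟨k, hk, hx⟩ => ?_
    have hk' := hk.trans (chaconH_div_two_lt n')
    obtain ⟨τ, -, -, hxτ⟩ := exists_mem_chaconLevel_succ hk' hx
    exact ⟨_, add_chaconOff_lt_div_two hk', hxτ⟩

lemma chaconCd_mono {n n' : ℕ} (h : n ≤ n') : chaconCd ι n ⊆ chaconCd ι n' :=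
  fun _ hx i => chaconC_mono h (hx i)

lemma eventually_mem_chaconC (x : ChaconX) : ∀ᶠ n in Filter.atTop, x ∈ chaconC n := by
  obtain ⟨n, k, hk, hx⟩ := exists_mem_chaconLevel x.2
  obtain ⟨τ, -, -, hxτ⟩ := exists_mem_chaconLevel_succ hk hx
  exact Filter.eventually_atTop.2
    ⟨n + 1, fun n' hn' => chaconC_mono hn' ⟨_, add_chaconOff_lt_div_two hk, hxτ⟩⟩

lemma eventually_mem_chaconCd [Finite ι] (x : ι → ChaconX) :
    ∀ᶠ n in Filter.atTop, x ∈ chaconCd ι n :=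
  Filter.eventually_all.2 fun i => eventually_mem_chaconC (x i)

def chaconBox (ι : Type) (n : ℕ) (v : ι → ℕ) : Set (ι → ChaconX) :=
  {x | ∀ i, (x i : ℝ) ∈ chaconLevel n (v i)}

lemma isNBox_iff {n : ℕ} {B : Set (ι → ChaconX)} :
    IsNBox ι n B ↔ ∃ v, (∀ i, v i < chaconH n / 2) ∧ B = chaconBox ι n v :=
  Iff.rfl

lemma chaconBox_nonempty (n : ℕ) (v : ι → ℕ) : (chaconBox ι n v).Nonempty :=
  ⟨fun i => ⟨chaconL n (v i), chaconL_nonneg n (v i)⟩,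
    fun i => ⟨le_rfl, lt_add_of_pos_right _ (by positivity)⟩⟩

lemma chaconBox_subset_chaconCd {n : ℕ} {v : ι → ℕ} (hv : ∀ i, v i < chaconH n / 2) :
    chaconBox ι n v ⊆ chaconCd ι n :=
  fun _ hx i => ⟨v i, hv i, hx i⟩

lemma eq_of_mem_chaconBox {n : ℕ} {v w : ι → ℕ} {x : ι → ChaconX}
    (hv : ∀ i, v i < chaconH n) (hw : ∀ i, w i < chaconH n)
    (hxv : x ∈ chaconBox ι n v) (hxw : x ∈ chaconBox ι n w) : v = w :=
  funext fun i => eq_of_mem_chaconLevel (hv i) (hw i) (hxv i) (hxw i)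

lemma eq_of_chaconBox_subset {n : ℕ} {v w : ι → ℕ} (hv : ∀ i, v i < chaconH n)
    (hw : ∀ i, w i < chaconH n) (h : chaconBox ι n v ⊆ chaconBox ι n w) : v = w :=
  have ⟨_, hx⟩ := chaconBox_nonempty n v
  eq_of_mem_chaconBox hv hw hx (h hx)

lemma lt_half_of_mem_chaconBox {n : ℕ} {v : ι → ℕ} {x : ι → ChaconX}
    (hv : ∀ i, v i < chaconH n) (hx : x ∈ chaconBox ι n v) (hxC : x ∈ chaconCd ι n) (i : ι) :
    v i < chaconH n / 2 := by
  obtain ⟨k, hk, hxk⟩ := hxC i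
  rwa [eq_of_mem_chaconLevel (hv i) (hk.trans (chaconH_div_two_lt n)) (hx i) hxk]

lemma chaconTd_iterate_apply (t : ℕ) (x : ι → ChaconX) (i : ι) :
    (chaconTd ι)^[t] x i = chaconT^[t] (x i) := by
  induction t generalizing x with
  | zero => rfl
  | succ t ih => exact ih (chaconTd ι x)

lemma chaconTdZ_natCast (t : ℕ) : chaconTdZ ι t = (chaconTd ι)^[t] := by
  ext x i
  simp [chaconTdZ, chaconTZ, chaconTd_iterate_apply]

lemma chaconTd_iterate_mem_chaconBox {n t : ℕ} {v : ι → ℕ} {x : ι → ChaconX}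
    (hv : ∀ i, v i + t < chaconH n) (hx : x ∈ chaconBox ι n v) :
    (chaconTd ι)^[t] x ∈ chaconBox ι n fun i => v i + t := by
  induction t with
  | zero => simpa using hx
  | succ t ih =>
    intro i
    rw [iterate_succ_apply']
    show (chaconT ((chaconTd ι)^[t] x i) : ℝ) ∈ chaconLevel n (v i + t + 1)
    exact chaconT_mem_chaconLevel (hv i) (ih (fun i => by have := hv i; omega) i)

lemma chaconTd_iterate_mem_chaconBox_of_mem_chaconCd {m δ : ℕ} {v : ι → ℕ} {z : ι → ChaconX}
    (hv : ∀ i, v i < chaconH m / 2) (hz : z ∈ chaconBox ι m v)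
    (hC : ∀ t ≤ δ, (chaconTd ι)^[t] z ∈ chaconCd ι m) :
    ∀ t ≤ δ, (chaconTd ι)^[t] z ∈ chaconBox ι m (fun i => v i + t) ∧
      ∀ i, v i + t < chaconH m / 2 := by
  have := chaconH_div_two_lt m
  intro t ht
  induction t with
  | zero => simpa using ⟨hz, hv⟩
  | succ t ih =>
    have hlt : ∀ i, v i + (t + 1) < chaconH m := fun i => by
      have := (ih (by omega)).2 i; omega
    have hmem := chaconTd_iterate_mem_chaconBox hlt hz
    exact ⟨hmem, lt_half_of_mem_chaconBox hlt hmem (hC _ ht)⟩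

def chaconDiag (ι : Type) (n : ℕ) (V : ι → ℕ) (l : ℕ) : Set (ι → ChaconX) :=
  ⋃ a ∈ Finset.range (l + 1), chaconBox ι n fun i => V i + a

lemma mem_chaconDiag {n l : ℕ} {V : ι → ℕ} {x : ι → ChaconX} :
    x ∈ chaconDiag ι n V l ↔ ∃ a ≤ l, x ∈ chaconBox ι n fun i => V i + a := by
  simp [chaconDiag]

/-- The maximality of `chaconDiag ι n V l` as an `n`-diagonal, read off its coordinates. -/
structure IsDiagonalIndex (ι : Type) (n : ℕ) (V : ι → ℕ) (l : ℕ) : Prop where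
  lt_half : ∀ i, V i + l < chaconH n / 2
  exists_eq_zero : ∃ i, V i = 0
  exists_half_le : ∃ i, chaconH n / 2 ≤ V i + l + 1

lemma chaconTdZ_neg_one_image_subset_chaconCd {n : ℕ} {V : ι → ℕ}
    (hV : ∀ i, V i < chaconH n / 2) (hpos : ∀ i, V i ≠ 0) :
    chaconTdZ ι (-1) '' chaconBox ι n V ⊆ chaconCd ι n := by
  rintro _ ⟨x, hx, rfl⟩ i
  refine ⟨V i - 1, by have := hV i; omega, ?_⟩
  have hk : V i - 1 + 1 < chaconH n := by
    have := hV i; have := chaconH_div_two_lt n; omega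
  have hxi : (x i : ℝ) ∈ chaconLevel n (V i - 1 + 1) := by
    rw [Nat.sub_add_cancel (Nat.one_le_iff_ne_zero.2 (hpos i))]; exact hx i
  simpa [chaconTdZ, chaconTZ] using chaconTinv_mem_chaconLevel hk hxi

lemma chaconTd_iterate_image_chaconBox_subset_chaconCd {n t : ℕ} {V : ι → ℕ}
    (hV : ∀ i, V i + t < chaconH n / 2) :
    (chaconTd ι)^[t] '' chaconBox ι n V ⊆ chaconCd ι n := by
  rintro _ ⟨x, hx, rfl⟩
  exact chaconBox_subset_chaconCd hV
    (chaconTd_iterate_mem_chaconBox (fun i => (hV i).trans (chaconH_div_two_lt n)) hx)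

lemma chaconTd_iterate_image_chaconBox_eq {n l : ℕ} {V : ι → ℕ}
    (hV : ∀ i, V i < chaconH n / 2)
    (hbox : ∀ a ≤ l, IsNBox ι n ((chaconTd ι)^[a] '' chaconBox ι n V)) :
    ∀ a ≤ l, (chaconTd ι)^[a] '' chaconBox ι n V = chaconBox ι n (fun i => V i + a) ∧
      ∀ i, V i + a < chaconH n / 2 := by
  have hn := chaconH_div_two_lt n
  intro a ha
  induction a with
  | zero => simpa using hV
  | succ a ih =>
    obtain ⟨w, hw, hweq⟩ := isNBox_iff.1 (hbox (a + 1) ha)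
    have hlt : ∀ i, V i + (a + 1) < chaconH n := fun i => by
      have := (ih (by omega)).2 i; omega
    have hsub : (chaconTd ι)^[a + 1] '' chaconBox ι n V ⊆
        chaconBox ι n fun i => V i + (a + 1) := by
      rintro _ ⟨x, hx, rfl⟩; exact chaconTd_iterate_mem_chaconBox hlt hx
    obtain rfl : w = fun i => V i + (a + 1) :=
      eq_of_chaconBox_subset (fun i => (hw i).trans hn) hlt (hweq ▸ hsub)
    exact ⟨hweq, hw⟩

lemma IsNDiagonal.exists_isDiagonalIndex {n : ℕ} {D : Set (ι → ChaconX)}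
    (hD : IsNDiagonal ι n D) : ∃ V l, IsDiagonalIndex ι n V l ∧ D = chaconDiag ι n V l := by
  obtain ⟨B, l, hbox, hbot, htop, rfl⟩ := hD
  simp only [chaconTdZ_natCast] at hbox
  obtain ⟨V, hV, rfl⟩ : ∃ V, (∀ i, V i < chaconH n / 2) ∧ B = chaconBox ι n V := by
    simpa using isNBox_iff.1 (hbox 0 (Nat.zero_le l))
  have hboxes := chaconTd_iterate_image_chaconBox_eq hV hbox
  refine ⟨V, l, ⟨(hboxes l le_rfl).2, ?_, ?_⟩, ?_⟩
  · by_contra! hpos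
    exact hbot (chaconTdZ_neg_one_image_subset_chaconCd hV hpos)
  · by_contra! hlt
    rw [← Nat.cast_succ, chaconTdZ_natCast] at htop
    exact htop (chaconTd_iterate_image_chaconBox_subset_chaconCd fun i => by
      have := hlt i; omega)
  · simp only [chaconDiag, chaconTdZ_natCast]
    exact iUnion₂_congr fun a ha => (hboxes a (Nat.lt_succ_iff.1 (Finset.mem_range.1 ha))).1

lemma measurableSet_chaconLevel (n k : ℕ) :
    MeasurableSet {x : ChaconX | (x : ℝ) ∈ chaconLevel n k} :=
  measurable_subtype_coe measurableSet_Ico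

lemma measurableSet_chaconBox [Countable ι] (n : ℕ) (v : ι → ℕ) :
    MeasurableSet (chaconBox ι n v) := by
  rw [show chaconBox ι n v =
      ⋂ i, (fun x => x i) ⁻¹' {y : ChaconX | (y : ℝ) ∈ chaconLevel n (v i)} by
    ext; simp [chaconBox]]
  exact .iInter fun i => measurableSet_chaconLevel n (v i) |>.preimage (measurable_pi_apply i)

lemma measurableSet_chaconCd [Countable ι] (n : ℕ) : MeasurableSet (chaconCd ι n) := by
  have hC : MeasurableSet (chaconC n) := by
    rw [show chaconC n =
        ⋃ k, {y : ChaconX | k < chaconH n / 2} ∩ {y | (y : ℝ) ∈ chaconLevel n k} by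
      ext; simp [chaconC]]
    exact .iUnion fun k => (MeasurableSet.const _).inter (measurableSet_chaconLevel n k)
  rw [show chaconCd ι n = ⋂ i, (fun x => x i) ⁻¹' chaconC n by ext; simp [chaconCd]]
  exact .iInter fun i => hC.preimage (measurable_pi_apply i)

lemma IsNDiagonal.measurableSet [Countable ι] {n : ℕ} {D : Set (ι → ChaconX)}
    (hD : IsNDiagonal ι n D) : MeasurableSet D := by
  obtain ⟨V, l, -, rfl⟩ := hD.exists_isDiagonalIndex
  exact Finset.measurableSet_biUnion _ fun a _ => measurableSet_chaconBox n _

end Boxes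

section Transitions

variable {ι : Type}

lemma chaconTn_eq {n k τ : ℕ} {x : ChaconX} (hk : k < chaconH n) (hτ : 1 ≤ τ) (hτ' : τ ≤ 3)
    (hx : (x : ℝ) ∈ chaconLevel n k)
    (hxτ : (x : ℝ) ∈ chaconLevel (n + 1) (k + chaconOff n τ)) : chaconTn n x = τ := by
  have hE : ∃ k', k' < chaconH n ∧ (x : ℝ) ∈ chaconLevel n k' := ⟨k, hk, hx⟩
  rw [chaconTn, dif_pos hE, eq_of_mem_chaconLevel hE.choose_spec.1 hk hE.choose_spec.2 hx]
  rw [chaconLevel_succ_add_chaconOff hk hτ hτ', inv_pow, mem_Ico, ← div_eq_mul_inv,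
    ← div_eq_mul_inv] at hxτ
  have h3 : (0 : ℝ) < 3 ^ (n + 1) := by positivity
  have hfl : ⌊((x : ℝ) - chaconL n k) * 3 ^ (n + 1)⌋ = (τ : ℤ) - 1 := by
    rw [Int.floor_eq_iff]
    push_cast
    constructor
    · rw [← div_le_iff₀ h3]; linarith [hxτ.1]
    · rw [sub_add_cancel, ← lt_div_iff₀ h3]; linarith [hxτ.2]
  rw [hfl]
  omega

lemma chaconBoxTau_one_subset {n : ℕ} {u : ι → ℕ} (hu : ∀ i, u i < chaconH n) :
    chaconBoxTau ι n (chaconBox ι n u) (fun _ => 1) ⊆ chaconBox ι (n + 1) u := by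
  rintro x ⟨hx, hτx⟩ i
  obtain ⟨τ, hτ, hτ', hxτ⟩ := exists_mem_chaconLevel_succ (hu i) (hx i)
  obtain rfl : τ = 1 := (chaconTn_eq (hu i) hτ hτ' (hx i) hxτ).symm.trans (hτx i)
  simpa [chaconOff] using hxτ

/-- An `(n+1)`-diagonal running parallel to the `n`-diagonal `D` is `D(1, …, 1)`: the boxes
`Bᵢ(1, …, 1)` of `D` all lie on its line, and its maximality forces it to contain them. -/
lemma centralTransition_of_sub_eq_const {n l l' : ℕ} {V V' : ι → ℕ}
    (hV : ∀ i, V i + l < chaconH n / 2) (hV' : IsDiagonalIndex ι (n + 1) V' l') (e : ℤ)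
    (he : ∀ i, (V' i : ℤ) = V i + e) :
    CentralTransition ι n (chaconDiag ι n V l) (chaconDiag ι (n + 1) V' l') := by
  rintro B ⟨u, hu, rfl⟩ hB
  have hn := chaconH_div_two_lt n
  have hn' := chaconH_succ_div_two n
  obtain ⟨a, ha, rfl⟩ : ∃ a ≤ l, u = fun i => V i + a := by
    obtain ⟨x, hx⟩ := chaconBox_nonempty n u
    obtain ⟨a, ha, hxa⟩ := mem_chaconDiag.1 (hB hx)
    exact ⟨a, ha, eq_of_mem_chaconBox (fun i => (hu i).trans hn)
      (fun i => by have := hV i; omega) hx hxa⟩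
  obtain ⟨i₀, hi₀⟩ := hV'.exists_eq_zero
  obtain ⟨i₁, hi₁⟩ := hV'.exists_half_le
  have hs₀ : 0 ≤ a - e := by have := he i₀; omega
  have hs₁ : a - e ≤ l' := by have := he i₁; have : V i₁ + a < _ := hu i₁; omega
  have hshift : (fun i => V' i + (a - e).toNat) = fun i => V i + a :=
    funext fun i => by have := he i; omega
  refine (chaconBoxTau_one_subset fun i => (hu i).trans hn).trans fun x hx => ?_
  exact mem_chaconDiag.2 ⟨(a - e).toNat, by omega, hshift ▸ hx⟩

/-- The offsets `0, hₙ, 2hₙ + 1` of the subcolumns have pairwise distinct differences. -/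
lemma eq_of_chaconOff_sub_eq {n τ₁ τ₂ σ₁ σ₂ : ℕ} (hτ₁ : 1 ≤ τ₁ ∧ τ₁ ≤ 3) (hτ₂ : 1 ≤ τ₂ ∧ τ₂ ≤ 3)
    (hσ₁ : 1 ≤ σ₁ ∧ σ₁ ≤ 3) (hσ₂ : 1 ≤ σ₂ ∧ σ₂ ≤ 3)
    (h : (chaconOff n τ₂ : ℤ) - chaconOff n τ₁ = (chaconOff n σ₂ : ℤ) - chaconOff n σ₁)
    (hσ : σ₁ ≠ σ₂) : τ₁ = σ₁ := by
  have := chaconH_pos n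
  obtain ⟨_, _⟩ := hτ₁; obtain ⟨_, _⟩ := hτ₂; obtain ⟨_, _⟩ := hσ₁; obtain ⟨_, _⟩ := hσ₂
  interval_cases τ₁ <;> interval_cases τ₂ <;> interval_cases σ₁ <;> interval_cases σ₂ <;>
    simp only [chaconOff] at h <;> norm_num at h <;> omega

/-- If both ends of the segment lie in the same subcolumns of tower `n`, the segment climbs
inside those subcolumns. Otherwise the offsets of the subcolumns at the two ends differ by the
same amount in every coordinate, which forces one common subcolumn for all coordinates of `z`,
so that `Dₙ₊₁` runs parallel to `Dₙ`. -/
lemma iterate_mem_chaconCd_of_not_centralTransition {n l l' δ : ℕ} {V V' : ι → ℕ}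
    {z : ι → ChaconX} (hV : ∀ i, V i + l < chaconH n / 2)
    (hV' : IsDiagonalIndex ι (n + 1) V' l')
    (hnc : ¬ CentralTransition ι n (chaconDiag ι n V l) (chaconDiag ι (n + 1) V' l'))
    (hC : ∀ t ≤ δ, (chaconTd ι)^[t] z ∈ chaconCd ι (n + 1))
    (hz : z ∈ chaconDiag ι n V l) (hz' : z ∈ chaconDiag ι (n + 1) V' l')
    (hzδ : (chaconTd ι)^[δ] z ∈ chaconDiag ι n V l) :
    ∀ t ≤ δ, (chaconTd ι)^[t] z ∈ chaconCd ι n := by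
  have hn := chaconH_div_two_lt n
  have hn' := chaconH_div_two_lt (n + 1)
  obtain ⟨a, ha, hza⟩ := mem_chaconDiag.1 hz
  obtain ⟨c, hc, hzc⟩ := mem_chaconDiag.1 hz'
  obtain ⟨a', ha', hzδa'⟩ := mem_chaconDiag.1 hzδ
  have hclimb := chaconTd_iterate_mem_chaconBox_of_mem_chaconCd
    (fun i => by have := hV'.lt_half i; omega) hzc hC
  choose τ hτ hτ' hτeq using fun i => exists_eq_add_chaconOff (k := V i + a) (k' := V' i + c)
    (by have := hV i; omega) (by have := hV'.lt_half i; omega) (hza i) (hzc i)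
  choose τ' hσ hσ' hσeq using fun i =>
    exists_eq_add_chaconOff (k := V i + a') (k' := V' i + c + δ)
    (by have := hV i; omega) (by have := (hclimb δ le_rfl).2 i; omega) (hzδa' i)
    ((hclimb δ le_rfl).1 i)
  by_cases hsame : ∀ i, τ i = τ' i
  · intro t ht i
    have haa' : a + δ = a' := by have := hτeq i; have := hσeq i; rw [hsame i] at *; omega
    have hlt : V i + a + t < chaconH n / 2 := by have := hV i; omega
    refine ⟨V i + a + t, hlt,
      chaconLevel_succ_add_chaconOff_subset (by omega) (hτ i) (hτ' i) ?_⟩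
    have : _ ∈ chaconLevel (n + 1) (V' i + c + t) := (hclimb t ht).1 i
    rwa [show V' i + c + t = V i + a + t + chaconOff n (τ i) by have := hτeq i; omega] at this
  · obtain ⟨i₀, hi₀⟩ := not_forall.1 hsame
    refine absurd (centralTransition_of_sub_eq_const hV hV' (a + chaconOff n (τ i₀) - c)
      fun i => ?_) hnc
    have hτi : τ i = τ i₀ := eq_of_chaconOff_sub_eq (n := n) ⟨hτ i, hτ' i⟩ ⟨hσ i, hσ' i⟩
      ⟨hτ i₀, hτ' i₀⟩ ⟨hσ i₀, hσ' i₀⟩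
      (by have := hτeq i; have := hσeq i; have := hτeq i₀; have := hσeq i₀; omega) hi₀
    have := hτeq i
    rw [hτi] at this
    omega

end Transitions

section NoReturn

variable {ι : Type} {m : ℕ} {D : ℕ → Set (ι → ChaconX)}

lemma SeenByFam.mem {x : ι → ChaconX} (hx : SeenByFam ι m D x) {n : ℕ} (hn : m ≤ n)
    (hxC : x ∈ chaconCd ι n) : x ∈ D n :=
  (hx n hn).resolve_left (not_not.2 hxC)

/-- Descending from a level where the whole segment lies in `Cₙ^ι`, one step at a time. -/
lemma iterate_mem_chaconCd_of_seenByFam [Finite ι] {δ : ℕ}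
    (hD : ∀ n ≥ m, IsNDiagonal ι n (D n))
    (hnc : ∀ n ≥ m, ¬ CentralTransition ι n (D n) (D (n + 1)))
    {y : ι → ChaconX} (hy : y ∈ chaconCd ι m) (hyδ : (chaconTd ι)^[δ] y ∈ chaconCd ι m)
    (hseen : SeenByFam ι m D y) (hseenδ : SeenByFam ι m D ((chaconTd ι)^[δ] y)) :
    ∀ t ≤ δ, (chaconTd ι)^[t] y ∈ chaconCd ι m := by
  obtain ⟨n, hmn, hn⟩ := ((Filter.eventually_ge_atTop m).and
    ((Finset.range (δ + 1)).eventually_all.2 fun t _ =>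
      eventually_mem_chaconCd ((chaconTd ι)^[t] y))).exists
  refine Nat.decreasingInduction
    (motive := fun k _ => m ≤ k → ∀ t ≤ δ, (chaconTd ι)^[t] y ∈ chaconCd ι k)
    (fun k _ ih hmk => ?_) (fun _ t ht => hn t (Finset.mem_range.2 (by omega))) hmn le_rfl
  obtain ⟨V, l, hV, hDk⟩ := (hD k hmk).exists_isDiagonalIndex
  obtain ⟨V', l', hV', hDk'⟩ := (hD (k + 1) (by omega)).exists_isDiagonalIndex
  have hnck := hnc k hmk
  rw [hDk, hDk'] at hnck
  exact iterate_mem_chaconCd_of_not_centralTransition hV.lt_half hV' hnck (ih (by omega))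
    (hDk ▸ hseen.mem hmk (chaconCd_mono hmk hy))
    (hDk' ▸ hseen.mem (n := k + 1) (by omega) (chaconCd_mono (by omega) hy))
    (hDk ▸ hseenδ.mem hmk (chaconCd_mono hmk hyδ))

lemma eq_zero_of_iterate_mem_chaconBox [Finite ι] {δ : ℕ}
    (hD : ∀ n ≥ m, IsNDiagonal ι n (D n))
    (hnc : ∀ n ≥ m, ¬ CentralTransition ι n (D n) (D (n + 1)))
    {v : ι → ℕ} (hv : ∀ i, v i < chaconH m / 2) {y : ι → ChaconX}
    (hy : y ∈ chaconBox ι m v) (hyδ : (chaconTd ι)^[δ] y ∈ chaconBox ι m v)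
    (hseen : SeenByFam ι m D y) (hseenδ : SeenByFam ι m D ((chaconTd ι)^[δ] y)) : δ = 0 := by
  have hm := chaconH_div_two_lt m
  have hC := iterate_mem_chaconCd_of_seenByFam hD hnc (chaconBox_subset_chaconCd hv hy)
    (chaconBox_subset_chaconCd hv hyδ) hseen hseenδ
  obtain ⟨hyδ', hlt⟩ :=
    chaconTd_iterate_mem_chaconBox_of_mem_chaconCd hv hy hC δ le_rfl
  have hvδ := eq_of_mem_chaconBox (fun i => (hlt i).trans hm) (fun i => (hv i).trans hm) hyδ' hyδ
  obtain ⟨V, l, hV, -⟩ := (hD m le_rfl).exists_isDiagonalIndex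
  obtain ⟨i, -⟩ := hV.exists_eq_zero
  have := congrFun hvδ i
  omega

lemma zWandering_chaconTdZ {W : Set (ι → ChaconX)}
    (hW : ∀ x ∈ W, ∀ i, x i ∉ chaconOrbitZero)
    (hret : ∀ x ∈ W, ∀ δ, (chaconTd ι)^[δ] x ∈ W → δ = 0) : ZWandering (chaconTdZ ι) W := by
  have hdisj : ∀ j k : ℤ, k < j → Disjoint (chaconTdZ ι j '' W) (chaconTdZ ι k '' W) := by
    intro j k hkj
    rw [disjoint_left]
    rintro _ ⟨x, hx, rfl⟩ ⟨y, hy, hxy⟩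
    have hyx : y = (chaconTd ι)^[(j - k).toNat] x := funext fun i => by
      rw [chaconTd_iterate_apply]
      exact chaconTZ_eq_iterate_of_eq hkj (hW x hx i) (hW y hy i) (congrFun hxy i).symm
    have := hret x hx _ (hyx ▸ hy)
    omega
  intro j k hjk
  rcases hjk.lt_or_gt with h | h
  · exact (hdisj k j h).symm
  · exact hdisj j k h

end NoReturn

section Measure

lemma measure_eq_zero_of_preimage_eq_pred {α : Type*} [MeasurableSpace α] {μ : Measure α}
    {f : α → α} (hf : AEMeasurable f μ) (hμf : μ.map f = μ) {B : ℕ → Set α}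
    (hB : ∀ s, MeasurableSet (B s)) (h₀ : f ⁻¹' B 0 = ∅) (hsucc : ∀ s, f ⁻¹' B (s + 1) = B s)
    (s : ℕ) : μ (B s) = 0 := by
  have hpre : ∀ s, μ (f ⁻¹' B s) = μ (B s) := fun s => by
    rw [← Measure.map_apply_of_aemeasurable hf (hB s), hμf]
  induction s with
  | zero => rw [← hpre, h₀, measure_empty]
  | succ s ih => rw [← hpre, hsucc, ih]

variable {ι : Type} {σ : Measure (ι → ChaconX)}

lemma measurableSet_setOf_exists_mem_chaconOrbitZero [Countable ι] :
    MeasurableSet {x : ι → ChaconX | ∃ i, x i ∈ chaconOrbitZero} := by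
  rw [ofPred_exists]
  exact .iUnion fun i => chaconOrbitZero_countable.measurableSet.preimage (measurable_pi_apply i)

lemma measure_setOf_exists_mem_chaconOrbitZero [Countable ι] (hσ : σ ≠ 0)
    (hinv : σ.map (chaconTd ι) = σ) : σ {x | ∃ i, x i ∈ chaconOrbitZero} = 0 := by
  have hf := AEMeasurable.of_map_ne_zero (hinv.symm ▸ hσ)
  rw [show {x : ι → ChaconX | ∃ i, x i ∈ chaconOrbitZero} =
      ⋃ i, ⋃ s : ℕ, {x | x i = chaconT^[s] chaconZero} by
    ext; simp [chaconOrbitZero, eq_comm]]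
  refine measure_iUnion_null fun i => measure_iUnion_null fun s => ?_
  refine measure_eq_zero_of_preimage_eq_pred hf hinv
    (B := fun s => {x | x i = chaconT^[s] chaconZero})
    (fun s => (measurableSet_singleton _).preimage (measurable_pi_apply i)) ?_ ?_ s
  · ext x
    simpa [chaconTd] using chaconT_ne_zero (x i)
  · intro s
    ext x
    simp [chaconTd, iterate_succ_apply', chaconT_injective.eq_iff]

lemma setOf_not_seenByFam {m : ℕ} {D : ℕ → Set (ι → ChaconX)} :
    {x | ¬ SeenByFam ι m D x} = ⋃ n ≥ m, chaconCd ι n \ D n := by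
  ext x
  simp only [SeenByFam, not_forall, not_or, not_not, mem_ofPred_eq, mem_iUnion, mem_sdiff,
    exists_prop, ge_iff_le]

lemma exists_measure_chaconCd_ne_zero [Finite ι] (hσ : σ ≠ 0) (N : ℕ) :
    ∃ m ≥ N, σ (chaconCd ι m) ≠ 0 := by
  obtain ⟨m, hm⟩ : ∃ m, σ (chaconCd ι m) ≠ 0 := by
    by_contra! h
    refine hσ (Measure.measure_univ_eq_zero.1 (measure_mono_null (fun x _ => ?_)
      (measure_iUnion_null h)))
    exact mem_iUnion.2 (eventually_mem_chaconCd x).exists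
  exact ⟨max N m, le_max_left _ _,
    fun h => hm (measure_mono_null (chaconCd_mono (le_max_right _ _)) h)⟩

lemma exists_measure_chaconBox_diff_ne_zero [Finite ι] {m : ℕ} (hm : σ (chaconCd ι m) ≠ 0)
    {N : Set (ι → ChaconX)} (hN : σ N = 0) :
    ∃ v : ι → ℕ, (∀ i, v i < chaconH m / 2) ∧ σ (chaconBox ι m v \ N) ≠ 0 := by
  by_contra! h
  refine hm (measure_mono_null (t := (⋃ v : ι → Fin (chaconH m / 2),
    chaconBox ι m (fun i => v i) \ N) ∪ N) (fun x hx => ?_)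
    (measure_union_null (measure_iUnion_null fun v => h _ fun i => (v i).2) hN))
  by_cases hxN : x ∈ N
  · exact Or.inr hxN
  · choose k hk using hx
    exact Or.inl (mem_iUnion.2 ⟨fun i => ⟨k i, (hk i).1⟩, fun i => (hk i).2, hxN⟩)

end Measure

/-- **Lemma (the central case occurs infinitely often).**  If `σ` is a diagonal measure
on `X^d`, `(Dₙ)_{n ≥ n₀}` its family of charged diagonals, and the system
`(X^d, σ, T^{×d})` is conservative, then there are infinitely many integers `n` such that
the transition from `Dₙ(σ)` to `D_{n+1}(σ)` is the central one,
`D_{n+1}(σ) = Dₙ(σ)(1,…,1)`. -/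
theorem chacon_central_case_io (d n₀ : ℕ) (σ : Measure (Fin d → ChaconX)) (hσ : σ ≠ 0)
    (hdm : IsDiagonalMeasure (Fin d) σ)
    (D : ℕ → Set (Fin d → ChaconX))
    (hD : ∀ n, n₀ ≤ n → IsNDiagonal (Fin d) n (D n) ∧ σ (chaconCd (Fin d) n \ D n) = 0)
    (hcons : ZConservative σ (chaconTdZ (Fin d))) :
    ∀ N : ℕ, ∃ n : ℕ, N ≤ n ∧ n₀ ≤ n ∧
      CentralTransition (Fin d) n (D n) (D (n + 1)) := by
  intro N
  by_contra! hnc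
  obtain ⟨m, hm, hCm⟩ := exists_measure_chaconCd_ne_zero hσ (max N n₀)
  have hDm : ∀ n ≥ m, IsNDiagonal (Fin d) n (D n) ∧ σ (chaconCd (Fin d) n \ D n) = 0 :=
    fun n hn => hD n (by omega)
  set bad := {x | ¬ SeenByFam (Fin d) m D x} ∪ {x | ∃ i, x i ∈ chaconOrbitZero}
  have hbad : σ bad = 0 := by
    refine measure_union_null ?_ (measure_setOf_exists_mem_chaconOrbitZero hσ hdm.2.1)
    rw [setOf_not_seenByFam]
    exact measure_biUnion_null_iff (to_countable _) |>.2 fun n hn => (hDm n hn).2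
  have hbad_meas : MeasurableSet bad := by
    refine MeasurableSet.union ?_ measurableSet_setOf_exists_mem_chaconOrbitZero
    rw [setOf_not_seenByFam]
    exact .biUnion (to_countable _) fun n hn =>
      (measurableSet_chaconCd n).diff (hDm n hn).1.measurableSet
  obtain ⟨v, hv, hW⟩ := exists_measure_chaconBox_diff_ne_zero hCm hbad
  refine hW (hcons _ ((measurableSet_chaconBox m v).diff hbad_meas) ?_)
  refine zWandering_chaconTdZ (fun x hx i hi => hx.2 (Or.inr ⟨i, hi⟩)) fun x hx δ hxδ => ?_
  exact eq_zero_of_iterate_mem_chaconBox (fun n hn => (hDm n hn).1)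
    (fun n hn => hnc n (by omega) (by omega)) hv hx.1 hxδ.1
    (not_not.1 fun h => hx.2 (Or.inl h)) (not_not.1 fun h => hxδ.2 (Or.inl h))
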